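/- Let |ψ'_1⟩,…,|ψ'_m⟩ be random (unnormalized) vectors in a complex Hilbert space, with |ψ'_j⟩ drawn from a distribution D_j, and set p_j = ⟨ψ'_j|ψ'_j⟩. Let ρ^{(k)} = Σ_{j=1}^m (|ψ'_j⟩⟨ψ'_j|)^{⊗k}/p_j^{k−1} and, for arbitrary fixed constants q_j > 0, let the proxy be ρ̃^{(k)} = Σ_{j=1}^m (|ψ'_j⟩⟨ψ'_j|)^{⊗k}/q_j^{k−1}. Then E‖ρ^{(k)} − ρ̃^{(k)}‖₁ ≤ Σ_{j=1}^m (E[p_j²])^{1/2} · (1 − (2/q_j^{k−1})·E[p_j^{k−1}] + (1/q_j^{2k−2})·E[p_j^{2k−2}])^{1/2}. -/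

import Mathlib

open MeasureTheory Matrix
open scoped ComplexOrder

noncomputable section

instance matrixMeasurableSpace {m n : Type*} : MeasurableSpace (Matrix m n ℂ) :=
  inferInstanceAs (MeasurableSpace (m → n → ℂ))

/-- The squared norm `⟨φ|φ⟩` of a vector. -/
def nsq {ι : Type*} [Fintype ι] (φ : ι → ℂ) : ℂ := star φ ⬝ᵥ φ

/-- The quadratic form `⟨φ|σ|φ⟩`. -/
def qForm {ι : Type*} [Fintype ι] (σ : Matrix ι ι ℂ) (φ : ι → ℂ) : ℂ :=
  star φ ⬝ᵥ σ.mulVec φ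

/-- The rank-one projector `|ψ⟩⟨ψ|`. -/
def proj {ι : Type*} (ψ : ι → ℂ) : Matrix ι ι ℂ := Matrix.vecMulVec ψ (star ψ)

/-- The `k`-fold tensor (Kronecker) power of a matrix. -/
def tpow {ι : Type*} (k : ℕ) (A : Matrix ι ι ℂ) : Matrix (Fin k → ι) (Fin k → ι) ℂ :=
  Matrix.of fun r c => ∏ i, A (r i) (c i)

/-- The `k`-fold tensor power of a vector. -/
def vpow {ι : Type*} (k : ℕ) (ψ : ι → ℂ) : (Fin k → ι) → ℂ := fun r => ∏ i, ψ (r i)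

/-- The permutation operator `π̂` on the `k`-fold tensor power. -/
def permOp (ι : Type*) [DecidableEq ι] (k : ℕ) (π : Equiv.Perm (Fin k)) :
    Matrix (Fin k → ι) (Fin k → ι) ℂ :=
  Matrix.of fun r c => if ∀ i, r i = c (π i) then 1 else 0

/-- The dimension `binom (D + k - 1) k` of the symmetric subspace. -/
def symDim (D k : ℕ) : ℕ := Nat.choose (D + k - 1) k

/-- The `k`-th moment `ρ_Haar^(k) = P_sym^(k) / D_k` of the Haar ensemble. -/
def haarMoment (ι : Type*) [Fintype ι] [DecidableEq ι] (k : ℕ) :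
    Matrix (Fin k → ι) (Fin k → ι) ℂ :=
  ((k.factorial : ℂ) * (symDim (Fintype.card ι) k : ℂ))⁻¹ •
    ∑ π : Equiv.Perm (Fin k), permOp ι k π

/-- The singular values of a matrix. -/
def singVals {ι : Type*} [Fintype ι] [DecidableEq ι] (A : Matrix ι ι ℂ) : ι → ℝ := fun i =>
  Real.sqrt ((Matrix.isHermitian_conjTranspose_mul_self A).eigenvalues i)

/-- The trace (Schatten 1-) norm. -/
def traceNorm {ι : Type*} [Fintype ι] [DecidableEq ι] (A : Matrix ι ι ℂ) : ℝ :=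
  ∑ i, singVals A i

/-- The Schatten `p`-norm. -/
def schatten {ι : Type*} [Fintype ι] [DecidableEq ι] (p : ℝ) (A : Matrix ι ι ℂ) : ℝ :=
  (∑ i, singVals A i ^ p) ^ (1 / p)

/-- The Schatten `∞` (operator) norm. -/
def schattenInf {ι : Type*} [Fintype ι] [DecidableEq ι] (A : Matrix ι ι ℂ) : ℝ :=
  ⨆ i, singVals A i

open Classical in
/-- The positive-semidefinite square root (with junk value `0` off the PSD cone). -/
def msqrt {ι : Type*} [Fintype ι] [DecidableEq ι] (σ : Matrix ι ι ℂ) : Matrix ι ι ℂ :=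
  if h : σ.PosSemidef then
    (h.1.eigenvectorUnitary : Matrix ι ι ℂ) * Matrix.diagonal ((↑) ∘ Real.sqrt ∘ h.1.eigenvalues) *
      (star (h.1.eigenvectorUnitary : Matrix ι ι ℂ)) else 0

/-- `μ` is the Haar (i.e. unitarily invariant) probability measure on the unit sphere. -/
structure IsHaarSphere {ι : Type*} [Fintype ι] [DecidableEq ι] (μ : Measure (ι → ℂ)) :
    Prop where
  prob : IsProbabilityMeasure μ
  sphere : μ {φ | nsq φ = 1} = 1
  invar : ∀ U : Matrix ι ι ℂ, U ∈ Matrix.unitaryGroup ι ℂ →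
    Measure.map (fun φ => U.mulVec φ) μ = μ

/-- `τ` is the Haar probability measure on the unitary group. -/
structure IsHaarUnitary {ι : Type*} [Fintype ι] [DecidableEq ι]
    (τ : Measure (Matrix ι ι ℂ)) : Prop where
  prob : IsProbabilityMeasure τ
  unitary : τ {U | U ∈ Matrix.unitaryGroup ι ℂ} = 1
  invar : ∀ V ∈ Matrix.unitaryGroup ι ℂ, Measure.map (fun U => V * U) τ = τ

/-- The `k`-th moment `ρ_Scrooge^(k)(σ)` of the Scrooge ensemble `Scrooge(σ)`,
where `μ` is the Haar measure on the unit sphere. -/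
def scroogeMoment {ι : Type*} [Fintype ι] [DecidableEq ι] (k : ℕ) (σ : Matrix ι ι ℂ)
    (μ : Measure (ι → ℂ)) : Matrix (Fin k → ι) (Fin k → ι) ℂ :=
  Matrix.of fun r c =>
    (Fintype.card ι : ℂ) *
      ∫ φ, tpow k (msqrt σ * proj φ * msqrt σ) r c / qForm σ φ ^ (k - 1) ∂μ

/-- The `k`-th moment of an ensemble of pure states described by a measure `ν` on vectors. -/
def ensMoment {ι : Type*} [Fintype ι] [DecidableEq ι] (k : ℕ) (ν : Measure (ι → ℂ)) :
    Matrix (Fin k → ι) (Fin k → ι) ℂ :=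
  Matrix.of fun r c => ∫ ψ, tpow k (proj ψ) r c ∂ν

/-- An orthonormal family of vectors. -/
def OrthonormalFam {κ ι : Type*} [Fintype ι] [DecidableEq κ] (e : κ → (ι → ℂ)) : Prop :=
  ∀ i j, star (e i) ⬝ᵥ e j = (if i = j then (1 : ℂ) else 0)

/-- The (unnormalized) conditional vector `(I_A ⊗ ⟨z|)|Ψ⟩`. -/
def projVec {ιA ιB : Type*} [Fintype ιB] (z : ιB → ℂ) (Ψ : ιA × ιB → ℂ) : ιA → ℂ :=
  fun a => ∑ b, star (z b) * Ψ (a, b)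

/-- The `k`-th moment `ρ_E^(k)(Ψ)` of the projected ensemble of `Ψ`, obtained by
measuring subsystem `B` in the orthonormal basis `e` (terms with vanishing outcome
probability give `0`, by the `0⁻¹ = 0` convention). -/
def projMoment {ιA ιB : Type*} [Fintype ιA] [Fintype ιB] (k : ℕ) (e : ιB → (ιB → ℂ))
    (Ψ : ιA × ιB → ℂ) : Matrix (Fin k → ιA) (Fin k → ιA) ℂ :=
  ∑ z, (nsq (projVec (e z) Ψ) ^ (k - 1))⁻¹ • tpow k (proj (projVec (e z) Ψ))

/-- Partial trace over `A`. -/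
def ptraceA {ιA ιB : Type*} [Fintype ιA] (σ : Matrix (ιA × ιB) (ιA × ιB) ℂ) :
    Matrix ιB ιB ℂ :=
  Matrix.of fun b b' => ∑ a, σ (a, b) (a, b')

/-- Partial trace over `B`. -/
def ptraceB {ιA ιB : Type*} [Fintype ιB] (σ : Matrix (ιA × ιB) (ιA × ιB) ℂ) :
    Matrix ιA ιA ℂ :=
  Matrix.of fun a a' => ∑ b, σ (a, b) (a', b)

/-- The (unnormalized) conditional operator `σ_{A|z} = (I_A ⊗ ⟨z|) σ (I_A ⊗ |z⟩)`. -/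
def condA {ιA ιB : Type*} [Fintype ιB] (σ : Matrix (ιA × ιB) (ιA × ιB) ℂ) (z : ιB → ℂ) :
    Matrix ιA ιA ℂ :=
  Matrix.of fun a a' => ∑ b, ∑ b', star (z b) * σ (a, b) (a', b') * z b'

/-- The normalized conditional state `σ̂_{A|z} = σ_{A|z} / ⟨z|σ_B|z⟩`. -/
def condAhat {ιA ιB : Type*} [Fintype ιA] [Fintype ιB]
    (σ : Matrix (ιA × ιB) (ιA × ιB) ℂ) (z : ιB → ℂ) : Matrix ιA ιA ℂ :=
  (qForm (ptraceA σ) z)⁻¹ • condA σ z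

/-- Normalization of a vector. -/
def normalize' {ι : Type*} [Fintype ι] (ψ : ι → ℂ) : ι → ℂ :=
  (Real.sqrt (nsq ψ).re)⁻¹ • ψ

/-- `(I_A ⊗ U)|Ψ⟩`. -/
def applyB {ιA ιB : Type*} [Fintype ιB] (U : Matrix ιB ιB ℂ) (Ψ : ιA × ιB → ℂ) :
    ιA × ιB → ℂ :=
  fun p => ∑ b', U p.2 b' * Ψ (p.1, b')

/-- Partial trace over the `A` factors of an operator on `(H_A ⊗ H_B)^{⊗k}`. -/
def ptraceAk {ιA ιB : Type*} [Fintype ιA] (k : ℕ)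
    (T : Matrix (Fin k → ιA × ιB) (Fin k → ιA × ιB) ℂ) :
    Matrix (Fin k → ιB) (Fin k → ιB) ℂ :=
  Matrix.of fun r c => ∑ g : Fin k → ιA, T (fun i => (g i, r i)) (fun i => (g i, c i))

/-- The uniform probability measure on `[0, 2π)^J`. -/
def phaseMeasure (J : Type*) [Fintype J] : Measure (J → ℝ) :=
  Measure.pi fun _ =>
    (ENNReal.ofReal (2 * Real.pi))⁻¹ • volume.restrict (Set.Ico 0 (2 * Real.pi))

/-- `γ` is a mean-zero (circularly symmetric) complex Gaussian distribution. -/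
def IsCplxGaussian (γ : Measure ℂ) : Prop :=
  ∃ v : NNReal, v ≠ 0 ∧
    γ = Measure.map (fun p : ℝ × ℝ => (⟨p.1, p.2⟩ : ℂ))
      ((ProbabilityTheory.gaussianReal 0 v).prod (ProbabilityTheory.gaussianReal 0 v))

section AuxS7

namespace S7

open Polynomial

variable {ι : Type*} [Fintype ι] [DecidableEq ι]

/-- Conjugation by a unitary as an algebra homomorphism. -/
def conjAH (U : Matrix ι ι ℂ) (hU : U ∈ Matrix.unitaryGroup ι ℂ) :
    Matrix ι ι ℂ →ₐ[ℂ] Matrix ι ι ℂ where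
  toFun B := U * B * star U
  map_one' := by
    show U * 1 * star U = 1
    rw [Matrix.mul_one, (Matrix.mem_unitaryGroup_iff).mp hU]
  map_mul' A B := by
    have h : star U * U = 1 := (Matrix.mem_unitaryGroup_iff').mp hU
    show U * (A * B) * star U = (U * A * star U) * (U * B * star U)
    simp only [Matrix.mul_assoc]
    rw [← Matrix.mul_assoc (star U) U, h, Matrix.one_mul]
  map_zero' := by
    show U * 0 * star U = 0
    simp
  map_add' A B := by
    show U * (A + B) * star U = U * A * star U + U * B * star U
    rw [Matrix.mul_add, Matrix.add_mul]
  commutes' r := by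
    simp only [Algebra.algebraMap_eq_smul_one, Matrix.mul_smul, Matrix.smul_mul, mul_one,
      (Matrix.mem_unitaryGroup_iff).mp hU]

lemma aeval_conj (U : Matrix ι ι ℂ) (hU : U ∈ Matrix.unitaryGroup ι ℂ)
    (B : Matrix ι ι ℂ) (p : ℂ[X]) :
    aeval (U * B * star U) p = U * aeval B p * star U :=
  aeval_algHom_apply (conjAH U hU) B p

lemma aeval_diag (d : ι → ℂ) (p : ℂ[X]) :
    aeval (Matrix.diagonal d) p = Matrix.diagonal (fun i => p.eval (d i)) := by
  have h1 : aeval (Matrix.diagonal d) p = Matrix.diagonal (aeval d p) :=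
    aeval_algHom_apply (Matrix.diagonalAlgHom ℂ) d p
  rw [h1]
  have h2 : (aeval d) p = fun i => p.eval (d i) := by
    funext i
    have h3 := aeval_algHom_apply (Pi.evalAlgHom ℂ (fun _ => ℂ) i) d p
    simp only [Pi.evalAlgHom_apply] at h3
    rw [← h3, Polynomial.aeval_def, Polynomial.eval, Algebra.algebraMap_self]
  rw [h2]

lemma trace_aeval (U : Matrix ι ι ℂ) (hU : U ∈ Matrix.unitaryGroup ι ℂ)
    (d : ι → ℂ) (p : ℂ[X]) :
    (aeval (U * Matrix.diagonal d * star U) p).trace = ∑ i, p.eval (d i) := by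
  rw [aeval_conj U hU, aeval_diag, Matrix.trace_mul_cycle,
    (Matrix.mem_unitaryGroup_iff').mp hU, one_mul, Matrix.trace_diagonal]

lemma mulVec_aeval {M : Matrix ι ι ℂ} {v : ι → ℂ} {c : ℂ} (h : M *ᵥ v = c • v) (p : ℂ[X]) :
    (aeval M p) *ᵥ v = p.eval c • v := by
  have hpow : ∀ n : ℕ, (M ^ n) *ᵥ v = (c ^ n) • v := by
    intro n
    induction n with
    | zero => simp
    | succ n ih =>
      rw [pow_succ, ← Matrix.mulVec_mulVec, h, Matrix.mulVec_smul, ih, smul_smul, pow_succ]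
      ring_nf
  induction p using Polynomial.induction_on' with
  | add p q hp hq => simp [Matrix.add_mulVec, hp, hq, add_smul]
  | monomial n a =>
    rw [aeval_monomial, eval_monomial, Algebra.algebraMap_eq_smul_one, smul_mul_assoc, one_mul,
      Matrix.smul_mulVec, hpow, smul_smul]

lemma traceNorm_eq_sum_abs {H : Matrix ι ι ℂ} (hH : H.IsHermitian) :
    traceNorm H = ∑ i, |hH.eigenvalues i| := by
  classical
  have hM : (Hᴴ * H).IsHermitian := Matrix.isHermitian_conjTranspose_mul_self H
  set U : Matrix ι ι ℂ := (Matrix.IsHermitian.eigenvectorUnitary hH : Matrix ι ι ℂ) with hUdef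
  have hUmem : U ∈ Matrix.unitaryGroup ι ℂ := (Matrix.IsHermitian.eigenvectorUnitary hH).2
  have hUU : star U * U = 1 := (Matrix.mem_unitaryGroup_iff').mp hUmem
  have hMeq : Hᴴ * H
      = U * Matrix.diagonal (fun i => ((hH.eigenvalues i ^ 2 : ℝ) : ℂ)) * star U := by
    have hsp : H = U * Matrix.diagonal (RCLike.ofReal ∘ hH.eigenvalues) * star U :=
      hH.spectral_theorem
    calc Hᴴ * H = H * H := by rw [hH.eq]
      _ = (U * Matrix.diagonal (RCLike.ofReal ∘ hH.eigenvalues) * star U)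
          * (U * Matrix.diagonal (RCLike.ofReal ∘ hH.eigenvalues) * star U) := by rw [← hsp]
      _ = U * (Matrix.diagonal (RCLike.ofReal ∘ hH.eigenvalues)
            * Matrix.diagonal (RCLike.ofReal ∘ hH.eigenvalues)) * star U := by
          simp only [Matrix.mul_assoc]
          rw [← Matrix.mul_assoc (star U) U, hUU, Matrix.one_mul]
      _ = U * Matrix.diagonal (fun i => ((hH.eigenvalues i ^ 2 : ℝ) : ℂ)) * star U := by
          rw [Matrix.diagonal_mul_diagonal]
          congr 1
          funext i
          simp [sq]
  set S : Finset ℝ := Finset.image (fun j => hH.eigenvalues j ^ 2) Finset.univ with hS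
  have hmemS : ∀ i, hM.eigenvalues i ∈ S := by
    intro i
    set qp : Polynomial ℂ := ∏ x ∈ S, (X - C (x : ℂ)) with hqp
    have hqe : ∀ c : ℂ, qp.eval c = ∏ x ∈ S, (c - (x : ℂ)) := by
      intro c; rw [hqp, Polynomial.eval_prod]; simp
    have hq0 : aeval (Hᴴ * H) qp = 0 := by
      rw [hMeq, aeval_conj _ hUmem, aeval_diag]
      have hz : (fun j => qp.eval (((hH.eigenvalues j ^ 2 : ℝ) : ℂ))) = fun _ => (0 : ℂ) := by
        funext j
        rw [hqe]
        exact Finset.prod_eq_zero (Finset.mem_image_of_mem _ (Finset.mem_univ j)) (by simp)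
      rw [hz]
      simp
    have hvec' : (Hᴴ * H) *ᵥ ⇑(hM.eigenvectorBasis i)
        = ((hM.eigenvalues i : ℂ)) • ⇑(hM.eigenvectorBasis i) := by
      rw [hM.mulVec_eigenvectorBasis i]
      funext a
      simp [Complex.real_smul]
    have h0 := mulVec_aeval hvec' qp
    rw [hq0, Matrix.zero_mulVec] at h0
    have hnz : ⇑(hM.eigenvectorBasis i) ≠ 0 := by
      intro hc
      apply hM.eigenvectorBasis.orthonormal.ne_zero i
      ext a
      exact congrFun hc a
    have hev0 : qp.eval ((hM.eigenvalues i : ℂ)) = 0 := by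
      rcases smul_eq_zero.mp h0.symm with h | h
      · exact h
      · exact absurd h hnz
    rw [hqe] at hev0
    rcases Finset.prod_eq_zero_iff.mp hev0 with ⟨x, hxS, hx0⟩
    have : (hM.eigenvalues i : ℂ) = (x : ℂ) := by linear_combination hx0
    rw [Complex.ofReal_inj.mp this]
    exact hxS
  have hsum : ∀ p : Polynomial ℝ,
      ∑ i, p.eval (hM.eigenvalues i) = ∑ i, p.eval (hH.eigenvalues i ^ 2) := by
    intro p
    set pC := p.map (algebraMap ℝ ℂ) with hpC
    have hev : ∀ x : ℝ, pC.eval ((x : ℂ)) = ((p.eval x : ℝ) : ℂ) := by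
      intro x
      rw [hpC, Polynomial.eval_map]
      exact Polynomial.eval₂_hom (algebraMap ℝ ℂ) x
    have hWmem : (Matrix.IsHermitian.eigenvectorUnitary hM : Matrix ι ι ℂ) ∈ Matrix.unitaryGroup ι ℂ :=
      (Matrix.IsHermitian.eigenvectorUnitary hM).2
    have h1 : (aeval (Hᴴ * H) pC).trace = ∑ i, ((p.eval (hM.eigenvalues i) : ℝ) : ℂ) := by
      rw [congrArg (fun A : Matrix ι ι ℂ => aeval A pC) (show Hᴴ * H = (hM.eigenvectorUnitary : Matrix ι ι ℂ) * Matrix.diagonal (RCLike.ofReal ∘ hM.eigenvalues) * star (hM.eigenvectorUnitary : Matrix ι ι ℂ) from hM.spectral_theorem),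
        trace_aeval _ hWmem]
      apply Finset.sum_congr rfl
      intro i _
      exact hev _
    have h2 : (aeval (Hᴴ * H) pC).trace = ∑ i, ((p.eval (hH.eigenvalues i ^ 2) : ℝ) : ℂ) := by
      rw [hMeq, trace_aeval _ hUmem]
      apply Finset.sum_congr rfl
      intro i _
      exact hev _
    have h3 := h1.symm.trans h2
    exact_mod_cast h3
  have hPS : ∀ x ∈ S, (Lagrange.interpolate S id Real.sqrt).eval x = Real.sqrt x := by
    intro x hx
    simpa using Lagrange.eval_interpolate_at_node Real.sqrt (Set.injOn_id _) hx
  calc traceNorm H = ∑ i, (Lagrange.interpolate S id Real.sqrt).eval (hM.eigenvalues i) := by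
        apply Finset.sum_congr rfl
        intro i _
        rw [hPS _ (hmemS i)]
        rfl
    _ = ∑ i, (Lagrange.interpolate S id Real.sqrt).eval (hH.eigenvalues i ^ 2) := hsum _
    _ = ∑ i, |hH.eigenvalues i| := by
        apply Finset.sum_congr rfl
        intro i _
        rw [hPS _ (Finset.mem_image_of_mem _ (Finset.mem_univ i)), Real.sqrt_sq_eq_abs]

lemma psd_diag_nonneg {M : Matrix ι ι ℂ} (hM : M.PosSemidef) (i : ι) : 0 ≤ M i i := by
  exact hM.diag_nonneg

lemma traceNorm_sub_le {X Y : Matrix ι ι ℂ} (hX : X.PosSemidef) (hY : Y.PosSemidef) :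
    traceNorm (X - Y) ≤ (X.trace).re + (Y.trace).re := by
  have hH : (X - Y).IsHermitian := hX.1.sub hY.1
  rw [traceNorm_eq_sum_abs hH]
  set U : Matrix ι ι ℂ := (Matrix.IsHermitian.eigenvectorUnitary hH : Matrix ι ι ℂ) with hUdef
  have hUmem : U ∈ Matrix.unitaryGroup ι ℂ := (Matrix.IsHermitian.eigenvectorUnitary hH).2
  have hdiag : star U * (X - Y) * U = Matrix.diagonal (RCLike.ofReal ∘ hH.eigenvalues) := by
    have h := hH.conjStarAlgAut_star_eigenvectorUnitary
    simp only [Unitary.conjStarAlgAut_apply, Unitary.coe_star, star_star] at h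
    exact h
  have hXc : (star U * X * U).PosSemidef := by
    rw [Matrix.star_eq_conjTranspose]
    exact hX.conjTranspose_mul_mul_same U
  have hYc : (star U * Y * U).PosSemidef := by
    rw [Matrix.star_eq_conjTranspose]
    exact hY.conjTranspose_mul_mul_same U
  have key : ∀ i, |hH.eigenvalues i|
      ≤ ((star U * X * U) i i).re + ((star U * Y * U) i i).re := by
    intro i
    have h1 : (star U * (X - Y) * U) i i = ((hH.eigenvalues i : ℝ) : ℂ) := by
      rw [hdiag]
      simp
    have h2 : (star U * (X - Y) * U) i i
        = (star U * X * U) i i - (star U * Y * U) i i := by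
      rw [Matrix.mul_sub, Matrix.sub_mul]
      simp [Matrix.sub_apply]
    have h3 : hH.eigenvalues i = ((star U * X * U) i i).re - ((star U * Y * U) i i).re := by
      have := congrArg Complex.re (h1.symm.trans h2)
      simpa using this
    have ha := (Complex.le_def.mp (psd_diag_nonneg hXc i)).1
    have hb := (Complex.le_def.mp (psd_diag_nonneg hYc i)).1
    simp only [Complex.zero_re] at ha hb
    rw [h3]
    calc |((star U * X * U) i i).re - ((star U * Y * U) i i).re|
        ≤ |((star U * X * U) i i).re| + |((star U * Y * U) i i).re| := abs_sub _ _
      _ = _ := by rw [abs_of_nonneg ha, abs_of_nonneg hb]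
  calc ∑ i, |hH.eigenvalues i|
      ≤ ∑ i, (((star U * X * U) i i).re + ((star U * Y * U) i i).re) :=
        Finset.sum_le_sum fun i _ => key i
    _ = ((star U * X * U).trace).re + ((star U * Y * U).trace).re := by
        rw [Finset.sum_add_distrib]
        simp [Matrix.trace, Matrix.diag, Complex.re_sum]
    _ = (X.trace).re + (Y.trace).re := by
        rw [Matrix.trace_mul_cycle (star U) X U, Matrix.trace_mul_cycle (star U) Y U,
          (Matrix.mem_unitaryGroup_iff).mp hUmem, Matrix.one_mul, Matrix.one_mul]

lemma traceNorm_sum_smul_le {κ : Type*} [Fintype κ] (r : κ → ℝ) (φ : κ → ι → ℂ) :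
    traceNorm (∑ j, (r j : ℂ) • Matrix.vecMulVec (φ j) (star (φ j)))
      ≤ ∑ j, |r j| * ∑ i, Complex.normSq (φ j i) := by
  classical
  set Ap : Matrix ι κ ℂ := Matrix.of fun i j => (Real.sqrt (max (r j) 0) : ℂ) * φ j i with hAp
  set An : Matrix ι κ ℂ := Matrix.of fun i j => (Real.sqrt (max (-r j) 0) : ℂ) * φ j i with hAn
  have entry : ∀ (s : κ → ℝ) (hs : ∀ j, 0 ≤ s j) (i i' : ι),
      ((Matrix.of fun i j => (Real.sqrt (s j) : ℂ) * φ j i) *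
        (Matrix.of fun i j => (Real.sqrt (s j) : ℂ) * φ j i)ᴴ) i i'
      = ∑ j, (s j : ℂ) * (φ j i * star (φ j i')) := by
    intro s hs i i'
    simp only [Matrix.mul_apply, Matrix.conjTranspose_apply, Matrix.of_apply, star_mul',
      Complex.star_def, Complex.conj_ofReal]
    apply Finset.sum_congr rfl
    intro j _
    have hss : (Real.sqrt (s j) : ℂ) * (Real.sqrt (s j) : ℂ) = (s j : ℂ) := by
      rw [← Complex.ofReal_mul, Real.mul_self_sqrt (hs j)]
    rw [← hss]
    ring
  have hsub : (∑ j, (r j : ℂ) • Matrix.vecMulVec (φ j) (star (φ j)))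
      = Ap * Apᴴ - An * Anᴴ := by
    ext i i'
    rw [Matrix.sub_apply, hAp, hAn, entry _ (fun j => le_max_right _ _),
      entry _ (fun j => le_max_right _ _), ← Finset.sum_sub_distrib]
    rw [Matrix.sum_apply]
    apply Finset.sum_congr rfl
    intro j _
    simp only [Matrix.smul_apply, Matrix.vecMulVec_apply, Pi.star_apply, smul_eq_mul]
    rw [← sub_mul, ← Complex.ofReal_sub]
    congr 2
    rcases le_total (r j) 0 with h | h
    · rw [max_eq_right h, max_eq_left (by linarith : (0:ℝ) ≤ -r j)]; ring
    · rw [max_eq_left h, max_eq_right (by linarith : -r j ≤ (0:ℝ))]; ring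
  have htr : ∀ (s : κ → ℝ) (hs : ∀ j, 0 ≤ s j),
      (((Matrix.of fun i j => (Real.sqrt (s j) : ℂ) * φ j i) *
        (Matrix.of fun i j => (Real.sqrt (s j) : ℂ) * φ j i)ᴴ).trace).re
      = ∑ j, s j * ∑ i, Complex.normSq (φ j i) := by
    intro s hs
    rw [Matrix.trace]
    simp only [Matrix.diag_apply, entry s hs]
    rw [Finset.sum_comm]
    rw [Complex.re_sum]
    apply Finset.sum_congr rfl
    intro j _
    rw [← Finset.mul_sum]
    have hns : (∑ i, φ j i * star (φ j i)) = ((∑ i, Complex.normSq (φ j i) : ℝ) : ℂ) := by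
      push_cast
      apply Finset.sum_congr rfl
      intro i _
      rw [Complex.star_def, Complex.mul_conj]
    rw [hns, ← Complex.ofReal_mul]
    simp
  rw [hsub]
  calc traceNorm (Ap * Apᴴ - An * Anᴴ)
      ≤ ((Ap * Apᴴ).trace).re + ((An * Anᴴ).trace).re :=
        traceNorm_sub_le (Matrix.posSemidef_self_mul_conjTranspose Ap)
          (Matrix.posSemidef_self_mul_conjTranspose An)
    _ = ∑ j, (max (r j) 0) * ∑ i, Complex.normSq (φ j i)
        + ∑ j, (max (-r j) 0) * ∑ i, Complex.normSq (φ j i) := by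
        rw [hAp, hAn, htr _ (fun j => le_max_right _ _), htr _ (fun j => le_max_right _ _)]
    _ = ∑ j, |r j| * ∑ i, Complex.normSq (φ j i) := by
        rw [← Finset.sum_add_distrib]
        apply Finset.sum_congr rfl
        intro j _
        rw [← add_mul]
        congr 1
        rcases le_total (r j) 0 with h | h
        · rw [max_eq_right h, max_eq_left (by linarith : (0:ℝ) ≤ -r j), abs_of_nonpos h]; ring
        · rw [max_eq_left h, max_eq_right (by linarith : -r j ≤ (0:ℝ)), abs_of_nonneg h]; ring

lemma tpow_proj (k : ℕ) (ψ : ι → ℂ) : tpow k (proj ψ) = proj (vpow k ψ) := by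
  ext r c
  simp only [tpow, proj, vpow, Matrix.of_apply, Matrix.vecMulVec_apply, Pi.star_apply]
  rw [Finset.prod_mul_distrib]
  congr 1
  rw [star_prod]

lemma nsq_real (φ : ι → ℂ) : nsq φ = ((∑ i, Complex.normSq (φ i) : ℝ) : ℂ) := by
  rw [nsq, dotProduct]
  push_cast
  apply Finset.sum_congr rfl
  intro i _
  rw [Pi.star_apply, Complex.star_def, mul_comm, Complex.mul_conj]

lemma nsq_re_nonneg (φ : ι → ℂ) : 0 ≤ (nsq φ).re := by
  rw [nsq_real]
  simp only [Complex.ofReal_re]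
  exact Finset.sum_nonneg fun i _ => Complex.normSq_nonneg _

lemma nsq_vpow (k : ℕ) (ψ : ι → ℂ) : nsq (vpow k ψ) = (nsq ψ) ^ k := by
  simp only [nsq, dotProduct, vpow, Pi.star_apply]
  have h1 : ∀ r : Fin k → ι, star (∏ i, ψ (r i)) * ∏ i, ψ (r i)
      = ∏ i, (star (ψ (r i)) * ψ (r i)) := by
    intro r
    rw [star_prod, ← Finset.prod_mul_distrib]
  simp_rw [h1]
  have h2 := Finset.prod_univ_sum (fun _ : Fin k => (Finset.univ : Finset ι))
    (fun _ x => star (ψ x) * ψ x)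
  rw [Fintype.piFinset_univ] at h2
  rw [← h2, Finset.prod_const, Finset.card_univ, Fintype.card_fin]

lemma nsq_eq_re (φ : ι → ℂ) : nsq φ = (((nsq φ).re : ℝ) : ℂ) := by
  rw [nsq_real]
  simp

lemma traceNorm_nonneg (A : Matrix ι ι ℂ) : 0 ≤ traceNorm A :=
  Finset.sum_nonneg fun i _ => Real.sqrt_nonneg _

lemma pointwise_bound {D m : ℕ} (k : ℕ) (q : Fin m → ℝ) (hq : ∀ j, 0 < q j)
    (v : Fin m → Fin D → ℂ) :
    traceNorm ((∑ j, (nsq (v j) ^ (k - 1))⁻¹ • tpow k (proj (v j))) -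
          ∑ j, ((q j : ℂ) ^ (k - 1))⁻¹ • tpow k (proj (v j)))
      ≤ ∑ j, (nsq (v j)).re * |1 - (nsq (v j)).re ^ (k-1) / q j ^ (k-1)| := by
  classical
  set p : Fin m → ℝ := fun j => (nsq (v j)).re with hpdef
  have hp0 : ∀ j, 0 ≤ p j := fun j => nsq_re_nonneg _
  set r : Fin m → ℝ := fun j => (p j ^ (k-1))⁻¹ - (q j ^ (k-1))⁻¹ with hrdef
  have hdiff : (∑ j, (nsq (v j) ^ (k - 1))⁻¹ • tpow k (proj (v j))) -
          ∑ j, ((q j : ℂ) ^ (k - 1))⁻¹ • tpow k (proj (v j))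
      = ∑ j, (r j : ℂ) • Matrix.vecMulVec (vpow k (v j)) (star (vpow k (v j))) := by
    rw [← Finset.sum_sub_distrib]
    apply Finset.sum_congr rfl
    intro j _
    rw [← sub_smul, tpow_proj, proj]
    congr 1
    rw [hrdef]
    have hre : nsq (v j) = ((p j : ℝ) : ℂ) := nsq_eq_re (v j)
    rw [hre]
    push_cast
    ring
  rw [hdiff]
  calc traceNorm (∑ j, (r j : ℂ) • Matrix.vecMulVec (vpow k (v j)) (star (vpow k (v j))))
      ≤ ∑ j, |r j| * ∑ i, Complex.normSq (vpow k (v j) i) :=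
        traceNorm_sum_smul_le r _
    _ ≤ ∑ j, p j * |1 - p j ^ (k-1) / q j ^ (k-1)| := by
        apply Finset.sum_le_sum
        intro j _
        have hnv : ∑ i, Complex.normSq (vpow k (v j) i) = p j ^ k := by
          have h1 : nsq (vpow k (v j)) = ((∑ i, Complex.normSq (vpow k (v j) i) : ℝ) : ℂ) :=
            nsq_real _
          have h2 : nsq (vpow k (v j)) = ((p j ^ k : ℝ) : ℂ) := by
            rw [nsq_vpow, show nsq (v j) = ((p j : ℝ) : ℂ) from nsq_eq_re (v j)]
            push_cast
            ring
          exact_mod_cast h1.symm.trans h2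
        rw [hnv]
        rcases Nat.eq_zero_or_pos k with hk | hk
        · subst hk
          simp [hrdef]
        rcases eq_or_lt_of_le (hp0 j) with hp | hp
        · rw [← hp, zero_pow (by omega : k ≠ 0)]
          simp
        have hqc : q j ^ (k-1) ≠ 0 := pow_ne_zero _ (ne_of_gt (hq j))
        have hpc : p j ^ (k-1) ≠ 0 := pow_ne_zero _ (ne_of_gt hp)
        have hkk : k - 1 + 1 = k := by omega
        have harg : r j * p j ^ k = p j * (1 - p j ^ (k-1) / q j ^ (k-1)) := by
          have hpk : p j ^ k = p j ^ (k-1) * p j := by rw [← pow_succ, hkk]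
          show ((p j ^ (k-1))⁻¹ - (q j ^ (k-1))⁻¹) * p j ^ k = _
          rw [hpk]
          field_simp
        refine le_of_eq ?_
        calc |r j| * p j ^ k = |r j * p j ^ k| := by
              rw [abs_mul, abs_of_nonneg (pow_nonneg (hp0 j) k)]
          _ = |p j * (1 - p j ^ (k-1) / q j ^ (k-1))| := by rw [harg]
          _ = p j * |1 - p j ^ (k-1) / q j ^ (k-1)| := by
              rw [abs_mul, abs_of_nonneg (hp0 j)]

end S7

end AuxS7

/-- `k`-th moment approximation lemma. -/
theorem statement7 (D m k : ℕ)
    (Ω : Type*) [MeasurableSpace Ω] (P : Measure Ω) [IsProbabilityMeasure P]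
    (ψ : Ω → Fin m → (Fin D → ℂ))
    (hmeas : ∀ j, AEStronglyMeasurable (fun ω => ψ ω j) P)
    (q : Fin m → ℝ) (hq : ∀ j, 0 < q j)
    (hint2 : ∀ j, Integrable (fun ω => (nsq (ψ ω j)).re ^ 2) P)
    (hintk : ∀ j, Integrable (fun ω => (nsq (ψ ω j)).re ^ (k - 1)) P)
    (hint2k : ∀ j, Integrable (fun ω => (nsq (ψ ω j)).re ^ (2 * k - 2)) P) :
    (∫ ω, traceNorm
        ((∑ j, (nsq (ψ ω j) ^ (k - 1))⁻¹ • tpow k (proj (ψ ω j))) -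
          ∑ j, ((q j : ℂ) ^ (k - 1))⁻¹ • tpow k (proj (ψ ω j))) ∂P)
      ≤ ∑ j, Real.sqrt (∫ ω, (nsq (ψ ω j)).re ^ 2 ∂P) *
          Real.sqrt (1 - 2 / q j ^ (k - 1) * (∫ ω, (nsq (ψ ω j)).re ^ (k - 1) ∂P) +
            1 / q j ^ (2 * k - 2) * ∫ ω, (nsq (ψ ω j)).re ^ (2 * k - 2) ∂P) := by
  classical
  set p : Fin m → Ω → ℝ := fun j ω => (nsq (ψ ω j)).re with hpdef
  set g : Fin m → Ω → ℝ := fun j ω => |1 - p j ω ^ (k - 1) / q j ^ (k - 1)| with hgdef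
  have hqc : ∀ j, q j ^ (k - 1) ≠ 0 := fun j => pow_ne_zero _ (ne_of_gt (hq j))
  have hp0 : ∀ j ω, 0 ≤ p j ω := fun j ω => S7.nsq_re_nonneg _
  have hg0 : ∀ j ω, 0 ≤ g j ω := fun j ω => abs_nonneg _
  -- measurability
  have hpm : ∀ j, AEStronglyMeasurable (p j) P := by
    intro j
    have hc : Continuous fun φ : Fin D → ℂ => (nsq φ).re := by
      apply Complex.continuous_re.comp
      unfold nsq dotProduct
      exact continuous_finset_sum _ fun i _ =>
        ((continuous_apply i).star.mul (continuous_apply i))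
    exact hc.comp_aestronglyMeasurable (hmeas j)
  have hgm : ∀ j, AEStronglyMeasurable (g j) P := by
    intro j
    have hc : Continuous fun x : ℝ => |1 - x ^ (k - 1) / q j ^ (k - 1)| :=
      (continuous_const.sub ((continuous_pow _).div_const _)).abs
    exact hc.comp_aestronglyMeasurable (hpm j)
  -- g² expansion
  have hg2eq : ∀ j, (fun ω => g j ω ^ 2)
      = fun ω => 1 - (2 / q j ^ (k - 1)) * p j ω ^ (k - 1)
          + (1 / q j ^ (2 * k - 2)) * p j ω ^ (2 * k - 2) := by
    intro j
    funext ω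
    rw [hgdef]
    simp only
    rw [sq_abs]
    have h2k : p j ω ^ (2 * k - 2) = (p j ω ^ (k - 1)) ^ 2 := by
      rw [← pow_mul]
      congr 1
      omega
    have hq2k : q j ^ (2 * k - 2) = (q j ^ (k - 1)) ^ 2 := by
      rw [← pow_mul]
      congr 1
      omega
    rw [h2k, hq2k]
    field_simp
    ring
  have hg2int : ∀ j, Integrable (fun ω => g j ω ^ 2) P := by
    intro j
    rw [hg2eq j]
    exact ((integrable_const 1).sub ((hintk j).const_mul _)).add ((hint2k j).const_mul _)
  -- value of ∫ g²
  have hg2val : ∀ j, ∫ ω, g j ω ^ 2 ∂P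
      = 1 - 2 / q j ^ (k - 1) * (∫ ω, p j ω ^ (k - 1) ∂P)
        + 1 / q j ^ (2 * k - 2) * ∫ ω, p j ω ^ (2 * k - 2) ∂P := by
    intro j
    rw [hg2eq j]
    have i0 : Integrable (fun ω => 2 / q j ^ (k - 1) * p j ω ^ (k - 1)) P :=
      (hintk j).const_mul _
    have i1 : Integrable (fun ω => 1 - 2 / q j ^ (k - 1) * p j ω ^ (k - 1)) P :=
      (integrable_const 1).sub i0
    have i2 : Integrable (fun ω => 1 / q j ^ (2 * k - 2) * p j ω ^ (2 * k - 2)) P :=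
      (hint2k j).const_mul _
    rw [integral_add i1 i2, integral_sub (integrable_const 1) i0,
      integral_const, integral_const_mul, integral_const_mul]
    simp
  -- Cauchy–Schwarz
  have hCS : ∀ j, ∫ ω, p j ω * g j ω ∂P
      ≤ Real.sqrt (∫ ω, p j ω ^ 2 ∂P) * Real.sqrt (∫ ω, g j ω ^ 2 ∂P) := by
    intro j
    have hconj : (2 : ℝ).HolderConjugate 2 := Real.HolderConjugate.two_two
    have hmp : MemLp (p j) (ENNReal.ofReal 2) P := by
      rw [show ENNReal.ofReal (2:ℝ) = 2 by norm_num]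
      exact (memLp_two_iff_integrable_sq (hpm j)).mpr (hint2 j)
    have hmg : MemLp (g j) (ENNReal.ofReal 2) P := by
      rw [show ENNReal.ofReal (2:ℝ) = 2 by norm_num]
      exact (memLp_two_iff_integrable_sq (hgm j)).mpr (hg2int j)
    have h := integral_mul_le_Lp_mul_Lq_of_nonneg hconj
      (Filter.Eventually.of_forall (hp0 j)) (Filter.Eventually.of_forall (hg0 j)) hmp hmg
    have hr : ∀ f : Ω → ℝ, (fun ω => f ω ^ (2:ℝ)) = fun ω => f ω ^ (2:ℕ) := by
      intro f
      funext ω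
      rw [show (2:ℝ) = ((2:ℕ):ℝ) by norm_num, Real.rpow_natCast]
    rw [hr (p j), hr (g j)] at h
    calc ∫ ω, p j ω * g j ω ∂P
        ≤ (∫ ω, p j ω ^ (2:ℕ) ∂P) ^ ((1:ℝ)/2) * (∫ ω, g j ω ^ (2:ℕ) ∂P) ^ ((1:ℝ)/2) := h
      _ = _ := by rw [← Real.sqrt_eq_rpow, ← Real.sqrt_eq_rpow]
  -- integrability of products
  have hpg : ∀ j, Integrable (fun ω => p j ω * g j ω) P := by
    intro j
    have ibnd : Integrable (fun ω => (p j ω ^ 2 + g j ω ^ 2) / 2) P :=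
      ((hint2 j).add (hg2int j)).div_const 2
    apply Integrable.mono' ibnd ((hpm j).mul (hgm j))
    filter_upwards with ω
    show ‖p j ω * g j ω‖ ≤ (p j ω ^ 2 + g j ω ^ 2) / 2
    rw [Real.norm_eq_abs, abs_of_nonneg (mul_nonneg (hp0 j ω) (hg0 j ω))]
    nlinarith [two_mul_le_add_sq (p j ω) (g j ω)]
  calc (∫ ω, traceNorm
        ((∑ j, (nsq (ψ ω j) ^ (k - 1))⁻¹ • tpow k (proj (ψ ω j))) -
          ∑ j, ((q j : ℂ) ^ (k - 1))⁻¹ • tpow k (proj (ψ ω j))) ∂P)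
      ≤ ∫ ω, ∑ j, p j ω * g j ω ∂P := by
        apply integral_mono_of_nonneg
        · filter_upwards with ω
          exact S7.traceNorm_nonneg _
        · exact integrable_finset_sum _ fun j _ => hpg j
        · filter_upwards with ω
          exact S7.pointwise_bound k q hq (ψ ω)
    _ = ∑ j, ∫ ω, p j ω * g j ω ∂P := integral_finset_sum _ fun j _ => hpg j
    _ ≤ ∑ j, Real.sqrt (∫ ω, p j ω ^ 2 ∂P) * Real.sqrt (∫ ω, g j ω ^ 2 ∂P) :=
        Finset.sum_le_sum fun j _ => hCS j
    _ = _ := by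
        apply Finset.sum_congr rfl
        intro j _
        rw [hg2val j]
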